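/- Let N ≥ 2, let x ∈ ℝ^N be a vector such that x_i ∈ [0,1] for every index i ≠ l, and let y be the vector obtained from x by replacing the l-th coordinate by its truncation to [0,1], i.e. y_l = max(0, min(x_l, 1)) and y_i = x_i for i ≠ l. Then the sample variance of y is at most the sample variance of x: S²(y) ≤ S²(x). -/

import Mathlib

open scoped BigOperators

/-!
As a function of the coordinate `x l = t`, with the other coordinates fixed, the sample variance
is a convex quadratic in `t` whose vertex is the mean of the other coordinates, a point of
`[0,1]`. Truncating `t` to `[0,1]` moves it towards the vertex, so the quadratic decreases.
-/

noncomputable def sampleVar {N : ℕ} (x : Fin N → ℝ) : ℝ :=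
  (1 / ((N : ℝ) - 1)) * (∑ i, x i ^ 2 - (∑ i, x i) ^ 2 / N)

open Finset Function

/-- The hypotheses on `b` say that the vertex `b / (2 * a)` lies in `[0,1]`. -/
theorem mul_sq_sub_mul_truncate_le {a b : ℝ} (hb : 0 ≤ b) (hba : b ≤ 2 * a) (t : ℝ) :
    a * max 0 (min t 1) ^ 2 - b * max 0 (min t 1) ≤ a * t ^ 2 - b * t := by
  have ha : 0 ≤ a := by linarith
  rcases le_total t 0 with ht0 | ht0
  · rw [min_eq_left (ht0.trans zero_le_one), max_eq_left ht0]
    nlinarith [mul_nonneg (neg_nonneg.2 ht0) (by nlinarith : 0 ≤ b - a * t)]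
  rcases le_total t 1 with ht1 | ht1
  · rw [min_eq_left ht1, max_eq_right ht0]
  · rw [min_eq_right ht1, max_eq_right zero_le_one]
    nlinarith [mul_nonneg (sub_nonneg.2 ht1) (by nlinarith : 0 ≤ a * (t + 1) - b)]

theorem sum_update_eq_add_sum_erase {ι M : Type*} [Fintype ι] [DecidableEq ι]
    [AddCommMonoid M] (f : ι → M) (l : ι) (b : M) :
    ∑ i, update f l b i = b + ∑ i ∈ univ.erase l, f i := by
  rw [sum_update_of_mem (mem_univ l), sdiff_singleton_eq_erase]

theorem sampleVar_update {N : ℕ} (x : Fin N → ℝ) (l : Fin N) (s : ℝ) :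
    sampleVar (update x l s) = 1 / ((N : ℝ) - 1) *
      (s ^ 2 + ∑ i ∈ univ.erase l, x i ^ 2 - (s + ∑ i ∈ univ.erase l, x i) ^ 2 / N) := by
  have hsq : (fun i => update x l s i ^ 2) = update (fun i => x i ^ 2) l (s ^ 2) :=
    funext (apply_update (fun _ y => y ^ 2) x l s)
  rw [sampleVar, hsq, sum_update_eq_add_sum_erase, sum_update_eq_add_sum_erase]

theorem sum_erase_mem_Icc {ι : Type*} [Fintype ι] [DecidableEq ι] (x : ι → ℝ) (l : ι)
    (hx : ∀ i, i ≠ l → x i ∈ Set.Icc (0 : ℝ) 1) :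
    ∑ i ∈ univ.erase l, x i ∈ Set.Icc 0 ((Fintype.card ι : ℝ) - 1) := by
  have hcard : ((univ.erase l).card : ℝ) = Fintype.card ι - 1 := by
    rw [card_erase_of_mem (mem_univ l), card_univ, Nat.cast_pred (Fintype.card_pos_iff.2 ⟨l⟩)]
  constructor
  · exact sum_nonneg fun i hi => (hx i (ne_of_mem_erase hi)).1
  · calc ∑ i ∈ univ.erase l, x i ≤ (univ.erase l).card • (1 : ℝ) :=
          sum_le_card_nsmul _ _ _ fun i hi => (hx i (ne_of_mem_erase hi)).2
      _ = Fintype.card ι - 1 := by rw [nsmul_one, hcard]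

/-- Truncating one coordinate of a vector (whose other coordinates lie in `[0,1]`) to the
interval `[0,1]` does not increase the sample variance. -/
theorem stmt7 {N : ℕ} (hN : 2 ≤ N) (x : Fin N → ℝ) (l : Fin N)
    (hx : ∀ i, i ≠ l → x i ∈ Set.Icc (0 : ℝ) 1) :
    sampleVar (Function.update x l (max 0 (min (x l) 1))) ≤ sampleVar x := by
  obtain ⟨hS0, hS1⟩ := sum_erase_mem_Icc x l hx
  rw [Fintype.card_fin] at hS1
  set S := ∑ i ∈ univ.erase l, x i
  set Q := ∑ i ∈ univ.erase l, x i ^ 2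
  have hN' : (2 : ℝ) ≤ N := by exact_mod_cast hN
  have hquad : ∀ s : ℝ, s ^ 2 + Q - (s + S) ^ 2 / N
      = (N - 1) / N * s ^ 2 - 2 * S / N * s + (Q - S ^ 2 / N) := fun s => by field_simp; ring
  have hvertex := mul_sq_sub_mul_truncate_le (a := (N - 1) / N) (b := 2 * S / N)
    (by positivity) (by rw [mul_div_assoc']; gcongr) (x l)
  rw [← update_eq_self l x, sampleVar_update, sampleVar_update, update_eq_self, hquad, hquad]
  exact mul_le_mul_of_nonneg_left (by linarith) (one_div_nonneg.2 (by linarith))
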